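/- arXiv:2104.03884 — 12 statements merged into one kernel-verified Lean document; each statement's English description precedes it below -/
import Mathlib

section
/- Let m be a Borel probability measure on ℝ and φ : ℝ → ℝ an m-integrable function. Then there exists a unique real number c ≥ 0 satisfying c = (1/2)·∫_ℝ (c + φ(x))⁺ m(dx). -/
open MeasureTheory

/-- There exists a unique `c ≥ 0` with `c = (1/2) ∫ (c + φ x)⁺ dm`. -/
theorem holding_threshold_exists_unique
    (m : Measure ℝ) [IsProbabilityMeasure m] (φ : ℝ → ℝ) (hφ : Integrable φ m) :
    ∃! c : ℝ, 0 ≤ c ∧ c = (1 / 2) * ∫ x, max (c + φ x) 0 ∂m := by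
  set F : ℝ → ℝ := fun c => (1 / 2) * ∫ x, max (c + φ x) 0 ∂m with hF
  have hint : ∀ c : ℝ, Integrable (fun x => max (c + φ x) 0) m :=
    fun c => ((integrable_const c).add hφ).pos_part
  have hlip : LipschitzWith (1 / 2) F := by
    apply LipschitzWith.of_dist_le_mul
    intro a b
    simp only [Real.dist_eq, hF]
    rw [← mul_sub, ← integral_sub (hint a) (hint b), abs_mul]
    have h1 : |∫ x, (max (a + φ x) 0 - max (b + φ x) 0) ∂m| ≤ |a - b| := by
      calc |∫ x, (max (a + φ x) 0 - max (b + φ x) 0) ∂m|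
          ≤ ∫ x, |max (a + φ x) 0 - max (b + φ x) 0| ∂m :=
            by simpa [Real.norm_eq_abs] using norm_integral_le_integral_norm (fun x => max (a + φ x) 0 - max (b + φ x) 0)
        _ ≤ ∫ _x, |a - b| ∂m := by
            apply integral_mono ((hint a).sub (hint b)).abs (integrable_const _)
            intro x
            calc |max (a + φ x) 0 - max (b + φ x) 0| ≤ |(a + φ x) - (b + φ x)| :=
                  abs_max_sub_max_le_abs _ _ _
              _ = |a - b| := by ring_nf
        _ = |a - b| := by simp
    have : |(1 / 2 : ℝ)| = 1 / 2 := by norm_num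
    rw [this]
    push_cast
    nlinarith [abs_nonneg (a - b)]
  have hcw : ContractingWith (1 / 2) F := ⟨by rw [show (1/2 : NNReal) = 2⁻¹ by norm_num]; exact inv_lt_one_of_one_lt₀ (by norm_num), hlip⟩
  set c := ContractingWith.fixedPoint F hcw with hc
  have hfix : F c = c := hcw.fixedPoint_isFixedPt
  have hnn : ∀ d : ℝ, 0 ≤ F d := by
    intro d
    apply mul_nonneg (by norm_num)
    exact integral_nonneg fun x => le_max_right _ _
  refine ⟨c, ⟨by rw [← hfix]; exact hnn c, hfix.symm⟩, ?_⟩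
  rintro y ⟨-, hy⟩
  exact hcw.fixedPoint_unique hy.symm
end

section
/- Let m and m′ be Borel probability measures on ℝ, φ : ℝ → ℝ m-integrable, ψ : ℝ → ℝ m′-integrable, and let c and c′ be the holding thresholds of (φ, m) and (ψ, m′) respectively. Then for every coupling γ of (m, m′), i.e. every Borel probability measure γ on ℝ² whose first marginal is m and whose second marginal is m′ and for which (x,x′) ↦ |φ(x) − ψ(x′)| is γ-integrable, one has |c − c′| ≤ ∫_{ℝ²} |φ(x) − ψ(x′)| γ(dx, dx′). -/
open MeasureTheory

/-- Lipschitz estimate of the holding threshold with respect to couplings: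
for every coupling `γ` of `(m, m')`, `|c - c'| ≤ ∫ |φ(x) - ψ(x')| γ(dx,dx')`. -/
theorem holding_threshold_coupling_estimate
    (m m' : Measure ℝ) [IsProbabilityMeasure m] [IsProbabilityMeasure m']
    (φ ψ : ℝ → ℝ) (hφ : Integrable φ m) (hψ : Integrable ψ m')
    (c c' : ℝ) (hc0 : 0 ≤ c)
    (hc : c = (1 / 2) * ∫ x, max (c + φ x) 0 ∂m)
    (hc'0 : 0 ≤ c')
    (hc' : c' = (1 / 2) * ∫ x, max (c' + ψ x) 0 ∂m')
    (γ : Measure (ℝ × ℝ)) [IsProbabilityMeasure γ]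
    (hγ1 : γ.map Prod.fst = m) (hγ2 : γ.map Prod.snd = m')
    (hint : Integrable (fun p : ℝ × ℝ => |φ p.1 - ψ p.2|) γ) :
    |c - c'| ≤ ∫ p : ℝ × ℝ, |φ p.1 - ψ p.2| ∂γ := by
  have hm1 : Integrable (fun x => max (c + φ x) 0) m :=
    ((integrable_const c).add hφ).pos_part
  have hm2 : Integrable (fun x => max (c' + ψ x) 0) m' :=
    ((integrable_const c').add hψ).pos_part
  have hfst : AEMeasurable (Prod.fst : ℝ × ℝ → ℝ) γ := measurable_fst.aemeasurable
  have hsnd : AEMeasurable (Prod.snd : ℝ × ℝ → ℝ) γ := measurable_snd.aemeasurable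
  have hA : ∫ x, max (c + φ x) 0 ∂m = ∫ p : ℝ × ℝ, max (c + φ p.1) 0 ∂γ := by
    rw [← hγ1, integral_map hfst]
    rw [hγ1]; exact hm1.1
  have hB : ∫ x, max (c' + ψ x) 0 ∂m' = ∫ p : ℝ × ℝ, max (c' + ψ p.2) 0 ∂γ := by
    rw [← hγ2, integral_map hsnd]
    rw [hγ2]; exact hm2.1
  have hγm1 : Integrable (fun p : ℝ × ℝ => max (c + φ p.1) 0) γ := by
    have := (integrable_map_measure (by rw [hγ1]; exact hm1.1) hfst).mp (by rw [hγ1]; exact hm1)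
    exact this
  have hγm2 : Integrable (fun p : ℝ × ℝ => max (c' + ψ p.2) 0) γ := by
    have := (integrable_map_measure (by rw [hγ2]; exact hm2.1) hsnd).mp (by rw [hγ2]; exact hm2)
    exact this
  have key : c - c' = (1 / 2) * ∫ p : ℝ × ℝ,
      (max (c + φ p.1) 0 - max (c' + ψ p.2) 0) ∂γ := by
    rw [integral_sub hγm1 hγm2, ← hA, ← hB]
    linarith
  set I := ∫ p : ℝ × ℝ, |φ p.1 - ψ p.2| ∂γ with hI
  have hbound : |c - c'| ≤ (1 / 2) * (|c - c'| + I) := by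
    have h1 : |∫ p : ℝ × ℝ, (max (c + φ p.1) 0 - max (c' + ψ p.2) 0) ∂γ|
        ≤ ∫ p : ℝ × ℝ, |max (c + φ p.1) 0 - max (c' + ψ p.2) 0| ∂γ := by
      have := norm_integral_le_integral_norm
        (μ := γ) (fun p : ℝ × ℝ => max (c + φ p.1) 0 - max (c' + ψ p.2) 0)
      simpa [Real.norm_eq_abs] using this
    have h2 : ∫ p : ℝ × ℝ, |max (c + φ p.1) 0 - max (c' + ψ p.2) 0| ∂γ
        ≤ ∫ p : ℝ × ℝ, (|c - c'| + |φ p.1 - ψ p.2|) ∂γ := by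
      apply integral_mono (hγm1.sub hγm2).abs ((integrable_const _).add hint)
      intro p
      have l1 : |max (c + φ p.1) 0 - max (c' + ψ p.2) 0| ≤ |(c + φ p.1) - (c' + ψ p.2)| :=
        abs_max_sub_max_le_abs _ _ _
      have l2 : |(c + φ p.1) - (c' + ψ p.2)| ≤ |c - c'| + |φ p.1 - ψ p.2| := by
        have : (c + φ p.1) - (c' + ψ p.2) = (c - c') + (φ p.1 - ψ p.2) := by ring
        rw [this]; exact abs_add_le _ _
      exact le_trans l1 l2
    have h3 : ∫ p : ℝ × ℝ, (|c - c'| + |φ p.1 - ψ p.2|) ∂γ = |c - c'| + I := by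
      rw [integral_add (integrable_const _) hint, integral_const]
      simp [hI]
    calc |c - c'| = (1 / 2) * |∫ p : ℝ × ℝ,
          (max (c + φ p.1) 0 - max (c' + ψ p.2) 0) ∂γ| := by
          rw [key, abs_mul]; norm_num
      _ ≤ (1 / 2) * (|c - c'| + I) := by
          apply mul_le_mul_of_nonneg_left _ (by norm_num)
          exact le_trans h1 (h2.trans_eq h3)
  linarith
end

section
/- Let m be a Borel probability measure on ℝ, b : ℝ → ℝ an m-integrable function, c the holding threshold of (b, m), and define B : ℝ → ℝ by B(x) := (1/2)·(b(x)+c)⁺ − (b(x)+c)⁻. Then: (i) for every x ∈ ℝ, B(x) ≥ 0 if and only if b(x) + c ≥ 0; (ii) ∫_ℝ B(x)⁺ m(dx) = c; (iii) for every x ∈ ℝ, B(x)·(1 + 𝟙_{B(x) ≥ 0}) = b(x) + ∫_ℝ B(y)⁺ m(dy), where 𝟙_{B(x) ≥ 0} equals 1 if B(x) ≥ 0 and 0 otherwise. -/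
open MeasureTheory

/-- Properties of the equilibrium drift `B = (1/2)(b+c)⁺ - (b+c)⁻` of the mean
field game of mutual holding, where `c` is the holding threshold of `(b, m)`:
(i) `B x ≥ 0 ↔ b x + c ≥ 0`; (ii) `∫ B⁺ dm = c`;
(iii) `B x (1 + 𝟙_{B x ≥ 0}) = b x + ∫ B⁺ dm` for every `x`. -/
theorem equilibrium_drift_properties
    (m : Measure ℝ) [IsProbabilityMeasure m] (b : ℝ → ℝ) (hb : Integrable b m)
    (c : ℝ) (hc0 : 0 ≤ c)
    (hc : c = (1 / 2) * ∫ x, max (c + b x) 0 ∂m)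
    (B : ℝ → ℝ)
    (hB : ∀ x : ℝ, B x = (1 / 2) * max (b x + c) 0 - max (-(b x + c)) 0) :
    (∀ x : ℝ, 0 ≤ B x ↔ 0 ≤ b x + c) ∧
    (∫ x, max (B x) 0 ∂m = c) ∧
    (∀ x : ℝ,
      B x * (1 + (if 0 ≤ B x then (1 : ℝ) else 0)) = b x + ∫ y, max (B y) 0 ∂m) := by
  have hiff : ∀ x : ℝ, 0 ≤ B x ↔ 0 ≤ b x + c := by
    intro x
    rcases le_or_gt 0 (b x + c) with h | h
    · have : B x = (1 / 2) * (b x + c) := by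
        rw [hB x, max_eq_left h, max_eq_right (by linarith)]
        ring
      constructor <;> intro _
      · exact h
      · rw [this]; linarith
    · have : B x = b x + c := by
        rw [hB x, max_eq_right h.le, max_eq_left (by linarith)]
        ring
      rw [this]
  have hmax : ∀ x : ℝ, max (B x) 0 = (1 / 2) * max (c + b x) 0 := by
    intro x
    rcases le_or_gt 0 (b x + c) with h | h
    · have hBx : B x = (1 / 2) * (b x + c) := by
        rw [hB x, max_eq_left h, max_eq_right (by linarith)]
        ring
      rw [hBx, max_eq_left (by linarith), max_eq_left (by linarith)]
      ring
    · have hBx : B x = b x + c := by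
        rw [hB x, max_eq_right h.le, max_eq_left (by linarith)]
        ring
      rw [hBx, max_eq_right h.le, max_eq_right (by linarith)]
      ring
  have hint : ∫ x, max (B x) 0 ∂m = c := by
    calc ∫ x, max (B x) 0 ∂m = ∫ x, (1 / 2) * max (c + b x) 0 ∂m := by
          exact integral_congr_ae (Filter.Eventually.of_forall hmax)
      _ = (1 / 2) * ∫ x, max (c + b x) 0 ∂m := integral_const_mul _ _
      _ = c := hc.symm
  refine ⟨hiff, hint, fun x => ?_⟩
  rw [hint]
  rcases le_or_gt 0 (b x + c) with h | h
  · have hBx : B x = (1 / 2) * (b x + c) := by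
      rw [hB x, max_eq_left h, max_eq_right (by linarith)]
      ring
    rw [if_pos ((hiff x).2 h), hBx]; ring
  · have hBx : B x = b x + c := by
      rw [hB x, max_eq_right h.le, max_eq_left (by linarith)]
      ring
    rw [if_neg (fun hh => absurd ((hiff x).1 hh) (not_le.2 h)), hBx]; ring
end

section
/- Let m be a Borel probability measure on ℝ, b : ℝ → ℝ an m-integrable function, and B : ℝ → ℝ a Borel measurable function with B⁺ m-integrable. Suppose that for m-almost every x ∈ ℝ one has B(x)·(1 + 𝟙_{B(x) ≥ 0}) = b(x) + ∫_ℝ B(y)⁺ m(dy), where 𝟙_{B(x) ≥ 0} equals 1 if B(x) ≥ 0 and 0 otherwise. Then ∫_ℝ B(y)⁺ m(dy) equals the holding threshold c of (b, m), and B(x) = (1/2)·(b(x)+c)⁺ − (b(x)+c)⁻ for m-almost every x. -/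
open MeasureTheory

/-- If a Borel function `B` with `B⁺` `m`-integrable satisfies `m`-a.e. the fixed
point equation `B x (1 + 𝟙_{B x ≥ 0}) = b x + ∫ B⁺ dm`, then `∫ B⁺ dm` equals
the holding threshold `c` of `(b, m)` and `B = (1/2)(b+c)⁺ - (b+c)⁻` `m`-a.e. -/
theorem equilibrium_drift_identification
    (m : Measure ℝ) [IsProbabilityMeasure m] (b B : ℝ → ℝ) (hb : Integrable b m)
    (hBmeas : Measurable B)
    (hBplus : Integrable (fun y => max (B y) 0) m)
    (heq : ∀ᵐ x ∂m,
      B x * (1 + (if 0 ≤ B x then (1 : ℝ) else 0)) = b x + ∫ y, max (B y) 0 ∂m)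
    (c : ℝ) (hc0 : 0 ≤ c)
    (hc : c = (1 / 2) * ∫ x, max (c + b x) 0 ∂m) :
    (∫ y, max (B y) 0 ∂m = c) ∧
    (∀ᵐ x ∂m, B x = (1 / 2) * max (b x + c) 0 - max (-(b x + c)) 0) := by
  set K := ∫ y, max (B y) 0 ∂m with hKdef
  have step1 : ∀ᵐ x ∂m, max (B x) 0 = (1/2) * max (K + b x) 0 := by
    filter_upwards [heq] with x hx
    by_cases h : 0 ≤ B x
    · rw [if_pos h] at hx
      have h2 : K + b x = 2 * B x := by linarith
      rw [max_eq_left h, h2, max_eq_left (by linarith)]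
      ring
    · rw [if_neg h] at hx
      push_neg at h
      have hB : B x = b x + K := by linarith
      rw [max_eq_right h.le, max_eq_right (by linarith)]
      ring
  have hintK : Integrable (fun x => max (K + b x) 0) m := ((integrable_const K).add hb).pos_part
  have hintc : Integrable (fun x => max (c + b x) 0) m := ((integrable_const c).add hb).pos_part
  have hKeq : K = (1/2) * ∫ x, max (K + b x) 0 ∂m := by
    calc K = ∫ x, max (B x) 0 ∂m := rfl
      _ = ∫ x, (1/2) * max (K + b x) 0 ∂m := integral_congr_ae step1
      _ = (1/2) * ∫ x, max (K + b x) 0 ∂m := MeasureTheory.integral_const_mul _ _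
  have hKc : K = c := by
    have hs := integral_sub hintK hintc
    have hsub : K - c = (1/2) * ∫ x, (max (K + b x) 0 - max (c + b x) 0) ∂m := by
      rw [hs]; linarith
    have habs : |K - c| ≤ (1/2) * |K - c| := by
      have h1 : |∫ x, (max (K + b x) 0 - max (c + b x) 0) ∂m|
          ≤ ∫ x, |max (K + b x) 0 - max (c + b x) 0| ∂m :=
        by simpa [Real.norm_eq_abs] using norm_integral_le_integral_norm (fun x => max (K + b x) 0 - max (c + b x) 0)
      have h2 : ∫ x, |max (K + b x) 0 - max (c + b x) 0| ∂m ≤ ∫ _x, |K - c| ∂m := by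
        refine integral_mono (hintK.sub hintc).abs (integrable_const _) (fun x => ?_)
        have := abs_max_sub_max_le_abs (K + b x) (c + b x) 0
        have he : |K + b x - (c + b x)| = |K - c| := by ring_nf
        linarith [this, he.le, he.ge]
      have h3 : ∫ _x, |K - c| ∂m = |K - c| := by simp
      calc |K - c| = (1/2) * |∫ x, (max (K + b x) 0 - max (c + b x) 0) ∂m| := by
            rw [hsub, abs_mul]; norm_num
        _ ≤ (1/2) * ∫ x, |max (K + b x) 0 - max (c + b x) 0| ∂m := by linarith
        _ ≤ (1/2) * |K - c| := by linarith
    have h0 : |K - c| = 0 := by linarith [abs_nonneg (K - c)]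
    have := abs_eq_zero.mp h0
    linarith
  refine ⟨hKc, ?_⟩
  filter_upwards [heq] with x hx
  rw [hKc] at hx
  by_cases h : 0 ≤ B x
  · rw [if_pos h] at hx
    have h2 : b x + c = 2 * B x := by linarith
    rw [h2, max_eq_left (by linarith), max_eq_right (by linarith)]
    ring
  · rw [if_neg h] at hx
    push_neg at h
    have hB : B x = b x + c := by linarith
    rw [max_eq_right (by linarith), max_eq_left (by linarith)]
    linarith
end

section
/- Let N ≥ 1 be an integer, π = (π¹,…,π^N) ∈ [0,1]^N, and b = (b¹,…,b^N) ∈ ℝ^N. Set w̄ := (1/N)·Σ_{j=1}^N π^j/(1+π^j). Then w̄ ≤ 1/2, so that 1 − w̄ ≥ 1/2 > 0, and the equilibrium drift system has a unique solution B ∈ ℝ^N, given explicitly by B^i = (S + b^i)/(1 + π^i) for every i, where S := [(1/N)·Σ_{j=1}^N (π^j/(1+π^j))·b^j]/(1 − w̄). Moreover this S satisfies S = (1/N)·Σ_{j=1}^N π^j B^j. -/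
open Finset

/-!
Writing `s := c ∑ⱼ πʲ Bʲ`, the `i`-th equation reads `(1 + πⁱ) Bⁱ = s + bⁱ`, so every solution has
the form `Bⁱ = (s + bⁱ)/(1 + πⁱ)`. Substituting this back into the definition of `s` leaves the
scalar equation `s = w̄ s + T` with `w̄ = c ∑ⱼ πʲ/(1 + πʲ)` and `T = c ∑ⱼ πʲ bʲ/(1 + πʲ)`, which
has the unique root `s = T/(1 - w̄)` as soon as `w̄ ≠ 1`. For `πʲ ∈ [0, 1]` each `πʲ/(1 + πʲ)` is at
most `1/2`, hence so is their average `w̄`.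
-/

lemma div_one_add_le_half {p : ℝ} (h0 : 0 ≤ p) (h1 : p ≤ 1) : p / (1 + p) ≤ 1 / 2 := by
  rw [div_le_iff₀ (by linarith)]
  linarith

lemma one_div_card_mul_sum_le {n : ℕ} {f : Fin n → ℝ} {a : ℝ} (ha : 0 ≤ a) (hf : ∀ i, f i ≤ a) :
    (1 / (n : ℝ)) * ∑ i, f i ≤ a := by
  have hsum : ∑ i, f i ≤ n * a := by
    simpa using Finset.sum_le_sum fun i (_ : i ∈ univ) => hf i
  rcases n.eq_zero_or_pos with rfl | hn
  · simpa using ha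
  · rw [one_div_mul_eq_div, div_le_iff₀ (by positivity)]
    linarith

lemma eq_sub_mul_add_iff_eq_div {x s p β : ℝ} (hp : 1 + p ≠ 0) :
    x = s - p * x + β ↔ x = (s + β) / (1 + p) := by
  rw [eq_div_iff hp]
  constructor <;> intro h <;> linarith

section DriftSystem

variable {ι : Type*} [Fintype ι] (c : ℝ) (π b : ι → ℝ)

def IsDriftSolution (B : ι → ℝ) : Prop :=
  ∀ i, B i = c * ∑ j, π j * B j - π i * B i + b i

noncomputable def driftLevel : ℝ :=
  (c * ∑ j, (π j / (1 + π j)) * b j) / (1 - c * ∑ j, π j / (1 + π j))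

noncomputable def driftSolution (i : ι) : ℝ :=
  (driftLevel c π b + b i) / (1 + π i)

variable {c π b}

lemma isDriftSolution_iff (hπ : ∀ i, 1 + π i ≠ 0) {B : ι → ℝ} :
    IsDriftSolution c π b B ↔ ∀ i, B i = (c * ∑ j, π j * B j + b i) / (1 + π i) :=
  forall_congr' fun i => eq_sub_mul_add_iff_eq_div (hπ i)

lemma mul_sum_mul_add_div (hπ : ∀ i, 1 + π i ≠ 0) (x : ℝ) :
    c * ∑ j, π j * ((x + b j) / (1 + π j)) =
      (c * ∑ j, π j / (1 + π j)) * x + c * ∑ j, (π j / (1 + π j)) * b j := by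
  have hterm : ∀ j, π j * ((x + b j) / (1 + π j)) =
      π j / (1 + π j) * x + π j / (1 + π j) * b j := fun j => by
    field_simp [hπ j]
  simp only [hterm, sum_add_distrib, ← sum_mul]
  ring

lemma mul_sum_driftSolution (hπ : ∀ i, 1 + π i ≠ 0) (hw : 1 - c * ∑ j, π j / (1 + π j) ≠ 0) :
    c * ∑ j, π j * driftSolution c π b j = driftLevel c π b := by
  simp only [driftSolution]
  rw [mul_sum_mul_add_div hπ, driftLevel]
  field_simp
  ring

lemma isDriftSolution_driftSolution (hπ : ∀ i, 1 + π i ≠ 0)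
    (hw : 1 - c * ∑ j, π j / (1 + π j) ≠ 0) :
    IsDriftSolution c π b (driftSolution c π b) := by
  rw [isDriftSolution_iff hπ, mul_sum_driftSolution hπ hw]
  exact fun i => rfl

lemma IsDriftSolution.mul_sum_eq_driftLevel (hπ : ∀ i, 1 + π i ≠ 0)
    (hw : 1 - c * ∑ j, π j / (1 + π j) ≠ 0) {B : ι → ℝ} (hB : IsDriftSolution c π b B) :
    c * ∑ j, π j * B j = driftLevel c π b := by
  set s := c * ∑ j, π j * B j with hs
  have hfixed : s = (c * ∑ j, π j / (1 + π j)) * s + c * ∑ j, (π j / (1 + π j)) * b j := by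
    conv_lhs => rw [hs, sum_congr rfl fun j _ => by rw [(isDriftSolution_iff hπ).1 hB j]]
    exact mul_sum_mul_add_div hπ s
  rw [driftLevel, eq_div_iff hw]
  linarith

lemma IsDriftSolution.eq_driftSolution (hπ : ∀ i, 1 + π i ≠ 0)
    (hw : 1 - c * ∑ j, π j / (1 + π j) ≠ 0) {B : ι → ℝ} (hB : IsDriftSolution c π b B) :
    B = driftSolution c π b := by
  funext i
  rw [(isDriftSolution_iff hπ).1 hB i, hB.mul_sum_eq_driftLevel hπ hw, driftSolution]

end DriftSystem

theorem equilibrium_drift_system_solution_general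
    (N : ℕ) (π b : Fin N → ℝ)
    (hπ : ∀ i, π i ∈ Set.Icc (0 : ℝ) 1) :
    (1 / (N : ℝ)) * ∑ j, π j / (1 + π j) ≤ 1 / 2 ∧
    (∃! B : Fin N → ℝ,
      ∀ i, B i = (1 / (N : ℝ)) * ∑ j, π j * B j - π i * B i + b i) ∧
    (∀ B : Fin N → ℝ,
      (∀ i, B i = (1 / (N : ℝ)) * ∑ j, π j * B j - π i * B i + b i) →
      (∀ i, B i =
        (((1 / (N : ℝ)) * ∑ j, (π j / (1 + π j)) * b j) /
            (1 - (1 / (N : ℝ)) * ∑ j, π j / (1 + π j)) + b i) / (1 + π i)) ∧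
      ((1 / (N : ℝ)) * ∑ j, (π j / (1 + π j)) * b j) /
          (1 - (1 / (N : ℝ)) * ∑ j, π j / (1 + π j)) =
        (1 / (N : ℝ)) * ∑ j, π j * B j) := by
  have hπ1 : ∀ i, 1 + π i ≠ 0 := fun i => by linarith [(hπ i).1]
  have hw : (1 / (N : ℝ)) * ∑ j, π j / (1 + π j) ≤ 1 / 2 :=
    one_div_card_mul_sum_le (by norm_num) fun i => div_one_add_le_half (hπ i).1 (hπ i).2
  have hw1 : 1 - (1 / (N : ℝ)) * ∑ j, π j / (1 + π j) ≠ 0 := by linarith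
  refine ⟨hw, ⟨driftSolution _ π b, isDriftSolution_driftSolution hπ1 hw1,
    fun B hB => IsDriftSolution.eq_driftSolution hπ1 hw1 hB⟩,
    fun B hB => ⟨congrFun (IsDriftSolution.eq_driftSolution hπ1 hw1 hB),
      (IsDriftSolution.mul_sum_eq_driftLevel hπ1 hw1 hB).symm⟩⟩

/-- The equilibrium drift system `B^i = (1/N) ∑_j π^j B^j - π^i B^i + b^i` has a
unique solution, given explicitly by `B^i = (S + b^i)/(1 + π^i)` with
`S = [(1/N) ∑_j (π^j/(1+π^j)) b^j] / (1 - w̄)`, where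
`w̄ = (1/N) ∑_j π^j/(1+π^j) ≤ 1/2`; moreover `S = (1/N) ∑_j π^j B^j`. -/
theorem equilibrium_drift_system_solution
    (N : ℕ) (hN : 1 ≤ N) (π b : Fin N → ℝ)
    (hπ : ∀ i, π i ∈ Set.Icc (0 : ℝ) 1) :
    (1 / (N : ℝ)) * ∑ j, π j / (1 + π j) ≤ 1 / 2 ∧
    (∃! B : Fin N → ℝ,
      ∀ i, B i = (1 / (N : ℝ)) * ∑ j, π j * B j - π i * B i + b i) ∧
    (∀ B : Fin N → ℝ,
      (∀ i, B i = (1 / (N : ℝ)) * ∑ j, π j * B j - π i * B i + b i) →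
      (∀ i, B i =
        (((1 / (N : ℝ)) * ∑ j, (π j / (1 + π j)) * b j) /
            (1 - (1 / (N : ℝ)) * ∑ j, π j / (1 + π j)) + b i) / (1 + π i)) ∧
      ((1 / (N : ℝ)) * ∑ j, (π j / (1 + π j)) * b j) /
          (1 - (1 / (N : ℝ)) * ∑ j, π j / (1 + π j)) =
        (1 / (N : ℝ)) * ∑ j, π j * B j) :=
  equilibrium_drift_system_solution_general N π b hπ
end

section
/- Let N ≥ 1 be an integer and π ∈ [0,1]^N. Let B be the unique solution of the equilibrium drift system with data (π, b) and B′ the unique solution with data (π, b′), for b, b′ ∈ ℝ^N. Then for every i ∈ {1,…,N}: |B^i − B′^i| ≤ |b^i − b′^i| + (1/N)·Σ_{j=1}^N |b^j − b′^j|. -/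
open Finset

/-!
Subtracting the two systems shows that `D = B - B'` solves the system with data `d = b - b'`,
so it suffices to bound a single solution by its data. Write `A` for the mean drift
`(1/N) ∑ⱼ πʲ Dʲ`; the system reads `(1 + πⁱ) Dⁱ = A + dⁱ`. Since `πʲ ≤ 1`, this gives
`πʲ |Dʲ| ≤ (|A| + |dʲ|) / 2`, and averaging over `j` yields `|A| ≤ |A| / 2 + (1/N) ∑ⱼ |dʲ| / 2`,
i.e. `|A| ≤ (1/N) ∑ⱼ |dʲ|`. Finally `|Dⁱ| ≤ (1 + πⁱ) |Dⁱ| = |A + dⁱ|`.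
-/

variable {ι : Type*} [Fintype ι]

noncomputable def meanDrift (π B : ι → ℝ) : ℝ :=
  (1 / (Fintype.card ι : ℝ)) * ∑ j, π j * B j

theorem meanDrift_sub (π B B' : ι → ℝ) :
    meanDrift π (B - B') = meanDrift π B - meanDrift π B' := by
  simp only [meanDrift, Pi.sub_apply, mul_sub, sum_sub_distrib]

def IsEquilibriumDriftSolution (π b B : ι → ℝ) : Prop :=
  ∀ i, B i = meanDrift π B - π i * B i + b i

namespace IsEquilibriumDriftSolution

variable {π b b' B B' : ι → ℝ}

theorem sub (hB : IsEquilibriumDriftSolution π b B) (hB' : IsEquilibriumDriftSolution π b' B') :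
    IsEquilibriumDriftSolution π (b - b') (B - B') := by
  intro i
  simp only [meanDrift_sub, Pi.sub_apply]
  linear_combination hB i - hB' i

theorem one_add_mul_eq (hB : IsEquilibriumDriftSolution π b B) (i : ι) :
    (1 + π i) * B i = meanDrift π B + b i := by
  linear_combination hB i

theorem abs_meanDrift_le (hπ : ∀ i, π i ∈ Set.Icc (0 : ℝ) 1) (hB : IsEquilibriumDriftSolution π b B) :
    |meanDrift π B| ≤ (1 / (Fintype.card ι : ℝ)) * ∑ j, |b j| := by
  set n : ℝ := (Fintype.card ι : ℝ) with hn_def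
  set A := meanDrift π B with hA_def
  have hterm : ∀ j, |π j * B j| ≤ (|A| + |b j|) / 2 := fun j => by
    obtain ⟨hπ0, hπ1⟩ := hπ j
    have h : (1 + π j) * |B j| ≤ |A| + |b j| := by
      rw [← abs_of_nonneg (by linarith : 0 ≤ 1 + π j), ← abs_mul, hB.one_add_mul_eq j]
      exact abs_add_le _ _
    rw [abs_mul, abs_of_nonneg hπ0]
    nlinarith [abs_nonneg (B j)]
  -- `1 / n * n` is `0`, not `1`, when `ι` is empty.
  have hn : 1 / n * n ≤ 1 := by
    rw [one_div_mul_eq_div]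
    exact div_self_le_one n
  have hA : |A| ≤ 1 / n * n * |A| / 2 + (1 / n * ∑ j, |b j|) / 2 :=
    calc |A| = 1 / n * |∑ j, π j * B j| := by
          rw [hA_def, meanDrift, abs_mul, abs_of_nonneg (by positivity)]
      _ ≤ 1 / n * ∑ j, (|A| + |b j|) / 2 := by
          gcongr
          exact (abs_sum_le_sum_abs _ _).trans (sum_le_sum fun j _ => hterm j)
      _ = 1 / n * n * |A| / 2 + (1 / n * ∑ j, |b j|) / 2 := by
          rw [← sum_div, sum_add_distrib, sum_const, card_univ, nsmul_eq_mul, ← hn_def]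
          ring
  nlinarith [abs_nonneg A]

theorem abs_le (hπ : ∀ i, π i ∈ Set.Icc (0 : ℝ) 1) (hB : IsEquilibriumDriftSolution π b B)
    (i : ι) : |B i| ≤ |b i| + (1 / (Fintype.card ι : ℝ)) * ∑ j, |b j| := by
  have hπ0 := (hπ i).1
  calc |B i| ≤ (1 + π i) * |B i| := le_mul_of_one_le_left (abs_nonneg (B i)) (by linarith)
    _ = |meanDrift π B + b i| := by
        rw [← hB.one_add_mul_eq i, abs_mul, abs_of_nonneg (by linarith : 0 ≤ 1 + π i)]
    _ ≤ |b i| + (1 / (Fintype.card ι : ℝ)) * ∑ j, |b j| := by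
        linarith [abs_add_le (meanDrift π B) (b i), hB.abs_meanDrift_le hπ]

end IsEquilibriumDriftSolution

theorem equilibrium_drift_system_stability_general
    (N : ℕ) (π b b' : Fin N → ℝ)
    (hπ : ∀ i, π i ∈ Set.Icc (0 : ℝ) 1)
    (B B' : Fin N → ℝ)
    (hB : ∀ i, B i = (1 / (N : ℝ)) * ∑ j, π j * B j - π i * B i + b i)
    (hB' : ∀ i, B' i = (1 / (N : ℝ)) * ∑ j, π j * B' j - π i * B' i + b' i) :
    ∀ i, |B i - B' i| ≤ |b i - b' i| + (1 / (N : ℝ)) * ∑ j, |b j - b' j| := by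
  have hsol : ∀ {c C : Fin N → ℝ}, (∀ i, C i = (1 / (N : ℝ)) * ∑ j, π j * C j - π i * C i + c i) →
      IsEquilibriumDriftSolution π c C := by
    intro c C hC
    simpa only [IsEquilibriumDriftSolution, meanDrift, Fintype.card_fin] using hC
  intro i
  simpa only [Fintype.card_fin, Pi.sub_apply] using ((hsol hB).sub (hsol hB')).abs_le hπ i

/-- Stability of the equilibrium drift system with respect to the data `b`:
if `B` and `B'` solve the system with data `(π, b)` and `(π, b')` respectively,
then `|B^i - B'^i| ≤ |b^i - b'^i| + (1/N) ∑_j |b^j - b'^j|`. -/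
theorem equilibrium_drift_system_stability
    (N : ℕ) (hN : 1 ≤ N) (π b b' : Fin N → ℝ)
    (hπ : ∀ i, π i ∈ Set.Icc (0 : ℝ) 1)
    (B B' : Fin N → ℝ)
    (hB : ∀ i, B i = (1 / (N : ℝ)) * ∑ j, π j * B j - π i * B i + b i)
    (hB' : ∀ i, B' i = (1 / (N : ℝ)) * ∑ j, π j * B' j - π i * B' i + b' i) :
    ∀ i, |B i - B' i| ≤ |b i - b' i| + (1 / (N : ℝ)) * ∑ j, |b j - b' j| :=
  equilibrium_drift_system_stability_general N π b b' hπ B B' hB hB'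
end

section
/- Fix integers N ≥ 2 and i ∈ {1,…,N}, vectors π, β ∈ [0,1]^N and b ∈ ℝ^N. Then the i-deviated drift system has a unique solution B ∈ ℝ^N, and it is given explicitly by: B^k = (A + (π^i/(N r^i))·b^i + b^k)/(r^k + β^k/N) for every k ≠ i, and B^i = ((1/N)·Σ_{j≠i} β^j B^j + b^i)/r^i, where r^j := 1 + ((N−1)/N)·π^j, a^{i,j} := (π^j + β^j π^i/(N r^i))/(r^j + β^j/N) for j ≠ i, and A := [(1/N)·Σ_{j≠i} a^{i,j}·(b^j + (π^i/(N r^i))·b^i)]/(1 − (1/N)·Σ_{j≠i} a^{i,j}); here 1 − (1/N)·Σ_{j≠i} a^{i,j} > 0 so A is well defined. -/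
/-!
With `q := π^i / (N r^i)`, the `i`-th equation reads `r^i B^i = (1/N) ∑_{j≠i} β^j B^j + b^i` and the
others read `(r^k + β^k/N) B^k = S + b^k`, where `S := (1/N) ∑_j π^j B^j`. Substituting both into
`S` gives the scalar equation `S = q b^i + (1/N) ∑_{j≠i} a^{i,j} (S + b^j)`. Its coefficient
`1 - (1/N) ∑_{j≠i} a^{i,j}` is positive because every `a^{i,j} ≤ 1`, so `S = A + q b^i`, and this
value of `S` determines every `B^k`.
-/

open Finset

noncomputable section

namespace DeviatedDrift

variable {ι : Type*} (N : ℝ) (i : ι) (π β b : ι → ℝ)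

def r (j : ι) : ℝ := 1 + (N - 1) / N * π j

def d (j : ι) : ℝ := r N π j + β j / N

def q : ℝ := π i / (N * r N π i)

def a (j : ι) : ℝ := (π j + β j * π i / (N * r N π i)) / d N π β j

section

variable {N i π β}

theorem a_mul_d {j : ι} (hd : d N π β j ≠ 0) :
    a N i π β j * d N π β j = π j + q N i π * β j := by
  rw [a, div_mul_cancel₀ _ hd, q]
  ring

theorem one_le_r (hN : 1 ≤ N) {j : ι} (hπ : 0 ≤ π j) : 1 ≤ r N π j := by
  have : 0 ≤ (N - 1) / N := div_nonneg (by linarith) (by linarith)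
  unfold r
  nlinarith

theorem d_pos (hN : 1 ≤ N) {j : ι} (hπ : 0 ≤ π j) (hβ : 0 ≤ β j) : 0 < d N π β j :=
  add_pos_of_pos_of_nonneg (one_pos.trans_le (one_le_r hN hπ)) (div_nonneg hβ (by linarith))

theorem q_le_one_div (hN : 1 ≤ N) (hπ : π i ∈ Set.Icc 0 1) : q N i π ≤ 1 / N := by
  have hr := one_le_r hN hπ.1
  rw [q, div_le_div_iff₀ (by positivity) (by positivity)]
  nlinarith [hπ.2]

theorem a_le_one (hN : 1 ≤ N) (hπ : ∀ j, π j ∈ Set.Icc 0 1) {j : ι} (hβ : 0 ≤ β j) :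
    a N i π β j ≤ 1 := by
  have hβq : β j * q N i π ≤ β j * (1 / N) :=
    mul_le_mul_of_nonneg_left (q_le_one_div hN (hπ i)) hβ
  rw [mul_one_div] at hβq
  have hr := one_le_r hN (hπ j).1
  rw [a, div_le_one (d_pos hN (hπ j).1 hβ), d, mul_div_assoc, ← q]
  linarith [(hπ j).2]

end

variable [Fintype ι] [DecidableEq ι]

def System (B : ι → ℝ) : Prop :=
  (B i = (1 / N) * ∑ j ∈ univ.erase i, β j * B j - ((N - 1) / N) * π i * B i + b i) ∧
    ∀ k, k ≠ i → B k = (1 / N) * ∑ j, π j * B j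
      - (1 / N) * β k * B k - ((N - 1) / N) * π k * B k + b k

def D : ℝ := 1 - (1 / N) * ∑ j ∈ univ.erase i, a N i π β j

def A : ℝ := ((1 / N) * ∑ j ∈ univ.erase i, a N i π β j * (b j + q N i π * b i)) / D N i π β

def solution (k : ι) : ℝ :=
  if k = i then
    ((1 / N) * ∑ j ∈ univ.erase i, β j * ((A N i π β b + q N i π * b i + b j) / d N π β j)
      + b i) / r N π i
  else (A N i π β b + q N i π * b i + b k) / d N π β k

variable {N i π β b} {B : ι → ℝ}

theorem system_iff : System N i π β b B ↔
    (r N π i * B i = (1 / N) * ∑ j ∈ univ.erase i, β j * B j + b i) ∧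
      ∀ k, k ≠ i → d N π β k * B k = (1 / N) * ∑ j, π j * B j + b k := by
  unfold System d r
  refine and_congr ⟨fun h => ?_, fun h => ?_⟩
    (forall₂_congr fun k _ => ⟨fun h => ?_, fun h => ?_⟩) <;> linear_combination h

theorem mean_eq_of_reduced (hr : r N π i ≠ 0) (hd : ∀ j, j ≠ i → d N π β j ≠ 0) {x : ℝ}
    (hi : r N π i * B i = (1 / N) * ∑ j ∈ univ.erase i, β j * B j + b i)
    (hk : ∀ j, j ≠ i → d N π β j * B j = x + b j) :
    (1 / N) * ∑ j, π j * B j = q N i π * b i + (1 / N) * (∑ j ∈ univ.erase i, a N i π β j) * x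
      + (1 / N) * ∑ j ∈ univ.erase i, a N i π β j * b j := by
  have hπi : (1 / N) * (π i * B i) = q N i π * (r N π i * B i) := by
    rw [q]; field_simp
  have hsum : ∑ j ∈ univ.erase i, π j * B j
      = ∑ j ∈ univ.erase i, (a N i π β j * x + a N i π β j * b j - q N i π * (β j * B j)) :=
    sum_congr rfl fun j hj => by
      have hji := (mem_erase.mp hj).1
      linear_combination a N i π β j * hk j hji - B j * a_mul_d (i := i) (hd j hji)
  rw [← add_sum_erase _ _ (mem_univ i), hsum, sum_sub_distrib, sum_add_distrib, ← sum_mul,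
    ← mul_sum]
  linear_combination hπi + q N i π * hi

theorem D_mul_A_add_q_mul (hD : D N i π β ≠ 0) :
    D N i π β * (A N i π β b + q N i π * b i)
      = q N i π * b i + (1 / N) * ∑ j ∈ univ.erase i, a N i π β j * b j := by
  have hA : D N i π β * A N i π β b
      = (1 / N) * ∑ j ∈ univ.erase i, a N i π β j * (b j + q N i π * b i) :=
    mul_div_cancel₀ _ hD
  simp only [mul_add, sum_add_distrib, ← sum_mul] at hA
  rw [D] at hA ⊢
  linear_combination hA

theorem mean_eq_of_system (hr : r N π i ≠ 0) (hd : ∀ j, j ≠ i → d N π β j ≠ 0)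
    (hD : D N i π β ≠ 0) (hB : System N i π β b B) :
    (1 / N) * ∑ j, π j * B j = A N i π β b + q N i π * b i := by
  obtain ⟨hi, hk⟩ := system_iff.mp hB
  have hmean := mean_eq_of_reduced hr hd hi hk
  refine mul_left_cancel₀ hD ?_
  rw [D_mul_A_add_q_mul hD, D]
  linear_combination hmean

theorem closed_form_of_system (hr : r N π i ≠ 0) (hd : ∀ j, j ≠ i → d N π β j ≠ 0)
    (hD : D N i π β ≠ 0) (hB : System N i π β b B) :
    (∀ k, k ≠ i → B k = (A N i π β b + q N i π * b i + b k) / d N π β k) ∧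
      B i = ((1 / N) * ∑ j ∈ univ.erase i, β j * B j + b i) / r N π i := by
  obtain ⟨hi, hk⟩ := system_iff.mp hB
  have hmean := mean_eq_of_system hr hd hD hB
  refine ⟨fun k hki => ?_, ?_⟩
  · rw [eq_div_iff (hd k hki)]
    linear_combination hk k hki + hmean
  · rw [eq_div_iff hr]
    linear_combination hi

theorem eq_solution_of_system (hr : r N π i ≠ 0) (hd : ∀ j, j ≠ i → d N π β j ≠ 0)
    (hD : D N i π β ≠ 0) (hB : System N i π β b B) : B = solution N i π β b := by
  obtain ⟨hk, hi⟩ := closed_form_of_system hr hd hD hB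
  funext k
  by_cases hki : k = i
  · subst hki
    rw [solution, if_pos rfl, hi]
    congr 3
    exact sum_congr rfl fun j hj => by rw [hk j (mem_erase.mp hj).1]
  · rw [solution, if_neg hki, hk k hki]

theorem solution_system (hr : r N π i ≠ 0) (hd : ∀ j, j ≠ i → d N π β j ≠ 0)
    (hD : D N i π β ≠ 0) : System N i π β b (solution N i π β b) := by
  set x := A N i π β b + q N i π * b i
  have hk : ∀ k, k ≠ i → d N π β k * solution N i π β b k = x + b k := fun k hki => by
    rw [solution, if_neg hki, mul_div_cancel₀ _ (hd k hki)]
  have hi : r N π i * solution N i π β b i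
      = (1 / N) * ∑ j ∈ univ.erase i, β j * solution N i π β b j + b i := by
    rw [solution, if_pos rfl, mul_div_cancel₀ _ hr]
    congr 2
    exact sum_congr rfl fun j hj => by rw [solution, if_neg (mem_erase.mp hj).1]
  have hmean := mean_eq_of_reduced hr hd hi hk
  have hx := D_mul_A_add_q_mul (b := b) hD
  rw [D] at hx
  refine system_iff.mpr ⟨hi, fun k hki => ?_⟩
  linear_combination hk k hki - hmean + hx

theorem D_pos (hcard : (Fintype.card ι : ℝ) ≤ N) (hπ : ∀ j, π j ∈ Set.Icc 0 1)
    (hβ : ∀ j, 0 ≤ β j) : 0 < D N i π β := by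
  have hι : 0 < Fintype.card ι := Fintype.card_pos_iff.mpr ⟨i⟩
  have hN : 1 ≤ N := le_trans (by exact_mod_cast hι) hcard
  have hsum : ∑ j ∈ univ.erase i, a N i π β j ≤ N - 1 := by
    calc ∑ j ∈ univ.erase i, a N i π β j ≤ #(univ.erase i) • (1 : ℝ) :=
          sum_le_card_nsmul _ _ _ fun j _ => a_le_one hN hπ (hβ j)
      _ = Fintype.card ι - 1 := by
          rw [card_erase_of_mem (mem_univ i), card_univ, nsmul_one,
            Nat.cast_pred hι]
      _ ≤ N - 1 := by linarith
  rw [D, sub_pos, one_div_mul_eq_div, div_lt_one (by linarith)]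
  linarith

end DeviatedDrift

theorem deviated_drift_system_solution_general
    (N : ℕ) (i : Fin N) (π β b : Fin N → ℝ)
    (hπ : ∀ j, π j ∈ Set.Icc (0 : ℝ) 1)
    (hβ : ∀ j, β j ∈ Set.Icc (0 : ℝ) 1) :
    let r : Fin N → ℝ := fun j => 1 + (((N : ℝ) - 1) / N) * π j
    let a : Fin N → ℝ := fun j =>
      (π j + β j * π i / ((N : ℝ) * r i)) / (r j + β j / (N : ℝ))
    let A : ℝ :=
      ((1 / (N : ℝ)) * ∑ j ∈ Finset.univ.erase i,
          a j * (b j + (π i / ((N : ℝ) * r i)) * b i)) /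
        (1 - (1 / (N : ℝ)) * ∑ j ∈ Finset.univ.erase i, a j)
    (0 < 1 - (1 / (N : ℝ)) * ∑ j ∈ Finset.univ.erase i, a j) ∧
    (∃! B : Fin N → ℝ,
      (B i = (1 / (N : ℝ)) * ∑ j ∈ Finset.univ.erase i, β j * B j
          - (((N : ℝ) - 1) / N) * π i * B i + b i) ∧
      (∀ k, k ≠ i → B k = (1 / (N : ℝ)) * ∑ j, π j * B j
          - (1 / (N : ℝ)) * β k * B k - (((N : ℝ) - 1) / N) * π k * B k + b k)) ∧
    (∀ B : Fin N → ℝ,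
      ((B i = (1 / (N : ℝ)) * ∑ j ∈ Finset.univ.erase i, β j * B j
          - (((N : ℝ) - 1) / N) * π i * B i + b i) ∧
       (∀ k, k ≠ i → B k = (1 / (N : ℝ)) * ∑ j, π j * B j
          - (1 / (N : ℝ)) * β k * B k - (((N : ℝ) - 1) / N) * π k * B k + b k)) →
      (∀ k, k ≠ i →
        B k = (A + (π i / ((N : ℝ) * r i)) * b i + b k) / (r k + β k / (N : ℝ))) ∧
      B i = ((1 / (N : ℝ)) * ∑ j ∈ Finset.univ.erase i, β j * B j + b i) / r i) := by
  intro r a A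
  have hN : (1 : ℝ) ≤ N := by exact_mod_cast i.pos
  have hβ₀ : ∀ j, 0 ≤ β j := fun j => (hβ j).1
  have hr : DeviatedDrift.r N π i ≠ 0 :=
    (one_pos.trans_le (DeviatedDrift.one_le_r hN (hπ i).1)).ne'
  have hd : ∀ j, j ≠ i → DeviatedDrift.d N π β j ≠ 0 :=
    fun j _ => (DeviatedDrift.d_pos hN (hπ j).1 (hβ₀ j)).ne'
  have hD := DeviatedDrift.D_pos (N := N) (i := i) (by simp) hπ hβ₀
  exact ⟨hD,
    ⟨_, DeviatedDrift.solution_system hr hd hD.ne',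
      fun B hB => DeviatedDrift.eq_solution_of_system hr hd hD.ne' hB⟩,
    fun B hB => DeviatedDrift.closed_form_of_system hr hd hD.ne' hB⟩

/-- The `i`-deviated drift system of the `N`-player mutual holding game has a
unique solution, given explicitly in terms of `r^j := 1 + ((N-1)/N) π^j`,
`a^{i,j} := (π^j + β^j π^i/(N r^i))/(r^j + β^j/N)` and
`A := [(1/N) ∑_{j≠i} a^{i,j} (b^j + (π^i/(N r^i)) b^i)] / (1 - (1/N) ∑_{j≠i} a^{i,j})`;
in particular `1 - (1/N) ∑_{j≠i} a^{i,j} > 0`. -/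
theorem deviated_drift_system_solution
    (N : ℕ) (hN : 2 ≤ N) (i : Fin N) (π β b : Fin N → ℝ)
    (hπ : ∀ j, π j ∈ Set.Icc (0 : ℝ) 1)
    (hβ : ∀ j, β j ∈ Set.Icc (0 : ℝ) 1) :
    let r : Fin N → ℝ := fun j => 1 + (((N : ℝ) - 1) / N) * π j
    let a : Fin N → ℝ := fun j =>
      (π j + β j * π i / ((N : ℝ) * r i)) / (r j + β j / (N : ℝ))
    let A : ℝ :=
      ((1 / (N : ℝ)) * ∑ j ∈ Finset.univ.erase i,
          a j * (b j + (π i / ((N : ℝ) * r i)) * b i)) /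
        (1 - (1 / (N : ℝ)) * ∑ j ∈ Finset.univ.erase i, a j)
    (0 < 1 - (1 / (N : ℝ)) * ∑ j ∈ Finset.univ.erase i, a j) ∧
    (∃! B : Fin N → ℝ,
      (B i = (1 / (N : ℝ)) * ∑ j ∈ Finset.univ.erase i, β j * B j
          - (((N : ℝ) - 1) / N) * π i * B i + b i) ∧
      (∀ k, k ≠ i → B k = (1 / (N : ℝ)) * ∑ j, π j * B j
          - (1 / (N : ℝ)) * β k * B k - (((N : ℝ) - 1) / N) * π k * B k + b k)) ∧
    (∀ B : Fin N → ℝ,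
      ((B i = (1 / (N : ℝ)) * ∑ j ∈ Finset.univ.erase i, β j * B j
          - (((N : ℝ) - 1) / N) * π i * B i + b i) ∧
       (∀ k, k ≠ i → B k = (1 / (N : ℝ)) * ∑ j, π j * B j
          - (1 / (N : ℝ)) * β k * B k - (((N : ℝ) - 1) / N) * π k * B k + b k)) →
      (∀ k, k ≠ i →
        B k = (A + (π i / ((N : ℝ) * r i)) * b i + b k) / (r k + β k / (N : ℝ))) ∧
      B i = ((1 / (N : ℝ)) * ∑ j ∈ Finset.univ.erase i, β j * B j + b i) / r i) :=
  deviated_drift_system_solution_general N i π β b hπ hβ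
end
end

section
/- Fix integers N ≥ 2 and i ∈ {1,…,N} and vectors π, β ∈ [0,1]^N. Set r^j := 1 + ((N−1)/N)·π^j and a^{i,j} := (π^j + β^j π^i/(N r^i))/(r^j + β^j/N) for j ≠ i. Then 0 ≤ a^{i,j} ≤ (N+1)/(2N) for every j ≠ i, and consequently (1/N)·Σ_{j≠i} a^{i,j} ≤ (N²−1)/(2N²), so that 1 − (1/N)·Σ_{j≠i} a^{i,j} ≥ 1/2. -/
open Finset

/-- Bounds on the coefficients `a^{i,j}` of the explicit solution of the
`i`-deviated drift system: `0 ≤ a^{i,j} ≤ (N+1)/(2N)` for `j ≠ i`, hence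
`(1/N) ∑_{j≠i} a^{i,j} ≤ (N²-1)/(2N²)` and `1 - (1/N) ∑_{j≠i} a^{i,j} ≥ 1/2`. -/
theorem deviated_drift_coefficients_bounds
    (N : ℕ) (hN : 2 ≤ N) (i : Fin N) (π β : Fin N → ℝ)
    (hπ : ∀ j, π j ∈ Set.Icc (0 : ℝ) 1)
    (hβ : ∀ j, β j ∈ Set.Icc (0 : ℝ) 1) :
    let r : Fin N → ℝ := fun j => 1 + (((N : ℝ) - 1) / N) * π j
    let a : Fin N → ℝ := fun j =>
      (π j + β j * π i / ((N : ℝ) * r i)) / (r j + β j / (N : ℝ))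
    (∀ j, j ≠ i → 0 ≤ a j ∧ a j ≤ ((N : ℝ) + 1) / (2 * N)) ∧
    (1 / (N : ℝ)) * ∑ j ∈ Finset.univ.erase i, a j ≤
      ((N : ℝ) ^ 2 - 1) / (2 * (N : ℝ) ^ 2) ∧
    1 / 2 ≤ 1 - (1 / (N : ℝ)) * ∑ j ∈ Finset.univ.erase i, a j := by
  intro r a
  have hN2 : (2 : ℝ) ≤ (N : ℝ) := by exact_mod_cast hN
  have hNpos : (0 : ℝ) < N := by linarith
  have hpi0 := (hπ i).1
  have hpi1 := (hπ i).2
  have hri : (1 : ℝ) ≤ r i := by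
    have h1 : 0 ≤ ((N : ℝ) - 1) / N * π i := by
      apply mul_nonneg (div_nonneg (by linarith) hNpos.le) hpi0
    simp only [r]; linarith
  have key : ∀ j, 0 ≤ a j ∧ a j ≤ ((N : ℝ) + 1) / (2 * N) := by
    intro j
    have hp0 := (hπ j).1; have hp1 := (hπ j).2
    have hb0 := (hβ j).1; have hb1 := (hβ j).2
    have hrj : (1 : ℝ) ≤ r j := by
      have h1 : 0 ≤ ((N : ℝ) - 1) / N * π j := by
        apply mul_nonneg (div_nonneg (by linarith) hNpos.le) hp0
      simp only [r]; linarith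
    have hD : (0 : ℝ) < r j + β j / N := by
      have h : 0 ≤ β j / N := div_nonneg hb0 hNpos.le
      have h1 : 0 ≤ ((N : ℝ) - 1) / N * π j :=
        mul_nonneg (div_nonneg (by linarith) hNpos.le) hp0
      simp only [r]; linarith
    have hnum0 : 0 ≤ π j + β j * π i / ((N : ℝ) * r i) := by
      have : 0 ≤ β j * π i / ((N : ℝ) * r i) :=
        div_nonneg (mul_nonneg hb0 hpi0) (by nlinarith)
      linarith
    refine ⟨div_nonneg hnum0 hD.le, ?_⟩
    rw [div_le_div_iff₀ hD (by positivity)]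
    have hkey : β j * π i / ((N : ℝ) * r i) ≤ β j / N := by
      apply div_le_div₀ hb0 (by nlinarith) hNpos (by nlinarith)
    have h2 : (π j + β j / N) * (2 * N) ≤ ((N : ℝ) + 1) * (r j + β j / N) := by
      simp only [r]
      have hNne : (N : ℝ) ≠ 0 := hNpos.ne'
      rw [← sub_nonneg]
      have hid : ((N : ℝ) + 1) * (1 + ((N : ℝ) - 1) / N * π j + β j / N) -
          (π j + β j / N) * (2 * N) =
          (((N : ℝ) ^ 2 + 1) * (1 - π j) + ((N : ℝ) - 1) * (1 - β j)) / N := by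
        field_simp
        ring
      rw [hid]
      apply div_nonneg _ hNpos.le
      nlinarith [mul_nonneg hp0 hb0, mul_nonneg (sub_nonneg.2 hp1) (sub_nonneg.2 hb1),
        sq_nonneg ((N:ℝ) - 1)]
    nlinarith
  have hcard : ((univ.erase i).card : ℝ) = (N : ℝ) - 1 := by
    rw [Finset.card_erase_of_mem (mem_univ i), Finset.card_univ, Fintype.card_fin]
    have : (1 : ℕ) ≤ N := by omega
    push_cast [Nat.cast_sub this]
    ring
  have hsum : ∑ j ∈ univ.erase i, a j ≤ ((N : ℝ) - 1) * (((N : ℝ) + 1) / (2 * N)) := by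
    calc ∑ j ∈ univ.erase i, a j ≤ ∑ _j ∈ univ.erase i, ((N : ℝ) + 1) / (2 * N) :=
          Finset.sum_le_sum (fun j _ => (key j).2)
      _ = ((univ.erase i).card : ℝ) * (((N : ℝ) + 1) / (2 * N)) := by
          rw [Finset.sum_const, nsmul_eq_mul]
      _ = ((N : ℝ) - 1) * (((N : ℝ) + 1) / (2 * N)) := by rw [hcard]
  have hbound : (1 / (N : ℝ)) * ∑ j ∈ univ.erase i, a j ≤
      ((N : ℝ) ^ 2 - 1) / (2 * (N : ℝ) ^ 2) := by
    have h3 : (1 / (N : ℝ)) * (((N : ℝ) - 1) * (((N : ℝ) + 1) / (2 * N))) =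
        ((N : ℝ) ^ 2 - 1) / (2 * (N : ℝ) ^ 2) := by
      field_simp; ring
    calc (1 / (N : ℝ)) * ∑ j ∈ univ.erase i, a j
        ≤ (1 / (N : ℝ)) * (((N : ℝ) - 1) * (((N : ℝ) + 1) / (2 * N))) := by
          apply mul_le_mul_of_nonneg_left hsum (by positivity)
      _ = ((N : ℝ) ^ 2 - 1) / (2 * (N : ℝ) ^ 2) := h3
  refine ⟨fun j _ => key j, hbound, ?_⟩
  have hhalf : ((N : ℝ) ^ 2 - 1) / (2 * (N : ℝ) ^ 2) ≤ 1 / 2 := by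
    rw [div_le_div_iff₀ (by positivity) (by norm_num)]
    nlinarith
  linarith
end

section
/- Fix integers N ≥ 2 and i ∈ {1,…,N}, vectors π, β ∈ [0,1]^N and b ∈ ℝ^N. With r^j := 1 + ((N−1)/N)·π^j, a^{i,j} := (π^j + β^j π^i/(N r^i))/(r^j + β^j/N) for j ≠ i, and A := [(1/N)·Σ_{j≠i} a^{i,j}·(b^j + (π^i/(N r^i))·b^i)]/(1 − (1/N)·Σ_{j≠i} a^{i,j}), one has |A| ≤ (2/N)·Σ_{j=1}^N |b^j|. -/
/-!
Write `c = π^i / (N r^i)`. Since `N r^i = N + (N-1) π^i ≥ (2N-1) π^i`, one has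
`(2N-1) c ≤ 1`, and this makes every weight `a^{i,j}` at most `M = N / (2N-1)`. As `M` is the
fixed point of `M ↦ 1 - (N-1) M / N`, the denominator of `A` is at least `M`, so it cancels the
factor `M` in `|∑ a^{i,j} (b^j + c b^i)| ≤ M ∑_{j ≠ i} (|b^j| + c |b^i|) ≤ M ∑_j |b^j|`.
This even gives `|A| ≤ (1/N) ∑_j |b^j|`.
-/

open Finset

section WeightedSum

variable {ι : Type*} {s : Finset ι} {a x : ι → ℝ} {n M D : ℝ}

lemma abs_inv_mul_sum_mul_div_le (hn : 0 ≤ n) (hM : 0 < M)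
    (ha : ∀ j ∈ s, a j ∈ Set.Icc 0 M) (hD : M ≤ D) :
    |(1 / n * ∑ j ∈ s, a j * x j) / D| ≤ 1 / n * ∑ j ∈ s, |x j| := by
  have hsum : |∑ j ∈ s, a j * x j| ≤ M * ∑ j ∈ s, |x j| := by
    rw [mul_sum]
    refine (abs_sum_le_sum_abs _ _).trans (sum_le_sum fun j hj => ?_)
    rw [abs_mul, abs_of_nonneg (ha j hj).1]
    exact mul_le_mul_of_nonneg_right (ha j hj).2 (abs_nonneg _)
  calc |(1 / n * ∑ j ∈ s, a j * x j) / D|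
      ≤ 1 / n * (M * ∑ j ∈ s, |x j|) / M := by
        rw [abs_div, abs_of_pos (hM.trans_le hD), abs_mul, abs_of_nonneg (by positivity)]
        exact div_le_div₀ (by positivity) (by gcongr) hM hD
    _ = 1 / n * ∑ j ∈ s, |x j| := by field_simp

lemma div_two_mul_sub_one_le_one_sub_inv_mul_sum (hn : 1 ≤ n) (hcard : (#s : ℝ) ≤ n - 1)
    (ha : ∀ j ∈ s, a j ≤ n / (2 * n - 1)) :
    n / (2 * n - 1) ≤ 1 - 1 / n * ∑ j ∈ s, a j := by
  have hsum : ∑ j ∈ s, a j ≤ (n - 1) * (n / (2 * n - 1)) :=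
    calc ∑ j ∈ s, a j ≤ #s * (n / (2 * n - 1)) := by
          simpa using sum_le_sum ha
      _ ≤ (n - 1) * (n / (2 * n - 1)) := by
          gcongr
          exact div_nonneg (by linarith) (by linarith)
  have hfix : 1 - 1 / n * ((n - 1) * (n / (2 * n - 1))) = n / (2 * n - 1) := by
    have : n ≠ 0 := by linarith
    have : n * 2 - 1 ≠ 0 := by linarith
    field_simp
    ring
  calc n / (2 * n - 1) = 1 - 1 / n * ((n - 1) * (n / (2 * n - 1))) := hfix.symm
    _ ≤ 1 - 1 / n * ∑ j ∈ s, a j := by gcongr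

lemma sum_erase_abs_add_mul_le [DecidableEq ι] {i : ι} (hi : i ∈ s) (b : ι → ℝ) {c : ℝ}
    (hc : 0 ≤ c) (hcard : ((#s : ℝ) - 1) * c ≤ 1) :
    ∑ j ∈ s.erase i, |b j + c * b i| ≤ ∑ j ∈ s, |b j| := by
  calc ∑ j ∈ s.erase i, |b j + c * b i|
      ≤ ∑ j ∈ s.erase i, (|b j| + c * |b i|) := by
        refine sum_le_sum fun j _ => (abs_add_le _ _).trans_eq ?_
        rw [abs_mul, abs_of_nonneg hc]
    _ = ∑ j ∈ s.erase i, |b j| + ((#s : ℝ) - 1) * c * |b i| := by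
        rw [sum_add_distrib, sum_const, nsmul_eq_mul, cast_card_erase_of_mem hi, mul_assoc]
    _ ≤ ∑ j ∈ s.erase i, |b j| + |b i| := by
        gcongr
        exact mul_le_of_le_one_left (abs_nonneg _) hcard
    _ = ∑ j ∈ s, |b j| := sum_erase_add s _ hi

end WeightedSum

section Rates

variable {n p q c : ℝ}

lemma mul_one_add_div_mul (hn : n ≠ 0) : n * (1 + (n - 1) / n * p) = n + (n - 1) * p := by
  field_simp

lemma one_le_one_add_div_mul (hn : 1 ≤ n) (hp : 0 ≤ p) : 1 ≤ 1 + (n - 1) / n * p := by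
  have : 0 ≤ (n - 1) / n * p := mul_nonneg (div_nonneg (by linarith) (by linarith)) hp
  linarith

lemma two_mul_sub_one_mul_div_le_one (hn : 1 ≤ n) (hp : p ∈ Set.Icc 0 1) :
    (2 * n - 1) * (p / (n * (1 + (n - 1) / n * p))) ≤ 1 := by
  have hden : 0 < n * (1 + (n - 1) / n * p) :=
    mul_pos (by linarith) (by linarith [one_le_one_add_div_mul hn hp.1])
  rw [← mul_div_assoc, div_le_one hden, mul_one_add_div_mul (by linarith)]
  nlinarith [hp.2]

lemma div_add_mul_div_le (hn : 1 ≤ n) (hp : p ∈ Set.Icc 0 1) (hq : 0 ≤ q)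
    (hc : (2 * n - 1) * c ≤ 1) :
    (p + q * c) / (1 + (n - 1) / n * p + q / n) ≤ n / (2 * n - 1) := by
  have hden : 0 < 1 + (n - 1) / n * p + q / n := by
    have : 0 ≤ q / n := div_nonneg hq (by linarith)
    linarith [one_le_one_add_div_mul hn hp.1]
  have hnden : n * (1 + (n - 1) / n * p + q / n) = n + (n - 1) * p + q := by
    field_simp
  rw [div_le_div_iff₀ hden (by linarith)]
  nlinarith [mul_le_mul_of_nonneg_left hc hq, hp.2]

lemma div_add_mul_div_nonneg (hn : 1 ≤ n) (hp : 0 ≤ p) (hq : 0 ≤ q) (hc : 0 ≤ c) :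
    0 ≤ (p + q * c) / (1 + (n - 1) / n * p + q / n) := by
  have : 0 ≤ (n - 1) / n * p := mul_nonneg (div_nonneg (by linarith) (by linarith)) hp
  positivity

end Rates

theorem deviated_drift_aggregate_bound_general
    (N : ℕ) (i : Fin N) (π β b : Fin N → ℝ)
    (hπ : ∀ j, π j ∈ Set.Icc (0 : ℝ) 1)
    (hβ : ∀ j, β j ∈ Set.Icc (0 : ℝ) 1) :
    let r : Fin N → ℝ := fun j => 1 + (((N : ℝ) - 1) / N) * π j
    let a : Fin N → ℝ := fun j =>
      (π j + β j * π i / ((N : ℝ) * r i)) / (r j + β j / (N : ℝ))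
    let A : ℝ :=
      ((1 / (N : ℝ)) * ∑ j ∈ Finset.univ.erase i,
          a j * (b j + (π i / ((N : ℝ) * r i)) * b i)) /
        (1 - (1 / (N : ℝ)) * ∑ j ∈ Finset.univ.erase i, a j)
    |A| ≤ (2 / (N : ℝ)) * ∑ j, |b j| := by
  intro r a A
  have hn : (1 : ℝ) ≤ N := Nat.one_le_cast.mpr i.pos
  set c := π i / ((N : ℝ) * r i)
  have hri : 1 ≤ r i := one_le_one_add_div_mul hn (hπ i).1
  have hc0 : 0 ≤ c := div_nonneg (hπ i).1 (mul_nonneg (by positivity) (zero_le_one.trans hri))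
  have hc1 : (2 * (N : ℝ) - 1) * c ≤ 1 := two_mul_sub_one_mul_div_le_one hn (hπ i)
  have ha : ∀ j ∈ univ.erase i, a j ∈ Set.Icc 0 ((N : ℝ) / (2 * N - 1)) := fun j _ => by
    simp only [a, mul_div_assoc]
    exact ⟨div_add_mul_div_nonneg hn (hπ j).1 (hβ j).1 hc0,
      div_add_mul_div_le hn (hπ j) (hβ j).1 hc1⟩
  have hcard : (#(univ.erase i) : ℝ) = N - 1 := by
    rw [cast_card_erase_of_mem (mem_univ i), card_univ, Fintype.card_fin]
  calc |A| ≤ 1 / N * ∑ j ∈ univ.erase i, |b j + c * b i| :=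
        abs_inv_mul_sum_mul_div_le (by positivity) (div_pos (by linarith) (by linarith)) ha
          (div_two_mul_sub_one_le_one_sub_inv_mul_sum hn hcard.le fun j hj => (ha j hj).2)
    _ ≤ 1 / N * ∑ j, |b j| := by
        gcongr
        refine sum_erase_abs_add_mul_le (mem_univ i) b hc0 ?_
        rw [card_univ, Fintype.card_fin]
        nlinarith
    _ ≤ 2 / N * ∑ j, |b j| := by
        gcongr
        norm_num

/-- Growth estimate on the aggregate quantity `A` appearing in the explicit
solution of the `i`-deviated drift system: `|A| ≤ (2/N) ∑_j |b^j|`. -/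
theorem deviated_drift_aggregate_bound
    (N : ℕ) (hN : 2 ≤ N) (i : Fin N) (π β b : Fin N → ℝ)
    (hπ : ∀ j, π j ∈ Set.Icc (0 : ℝ) 1)
    (hβ : ∀ j, β j ∈ Set.Icc (0 : ℝ) 1) :
    let r : Fin N → ℝ := fun j => 1 + (((N : ℝ) - 1) / N) * π j
    let a : Fin N → ℝ := fun j =>
      (π j + β j * π i / ((N : ℝ) * r i)) / (r j + β j / (N : ℝ))
    let A : ℝ :=
      ((1 / (N : ℝ)) * ∑ j ∈ Finset.univ.erase i,
          a j * (b j + (π i / ((N : ℝ) * r i)) * b i)) /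
        (1 - (1 / (N : ℝ)) * ∑ j ∈ Finset.univ.erase i, a j)
    |A| ≤ (2 / (N : ℝ)) * ∑ j, |b j| :=
  deviated_drift_aggregate_bound_general N i π β b hπ hβ
end

section
/- Let K > 0. There exists a constant C > 0, depending only on K, such that for every integer N ≥ 2, every i ∈ {1,…,N}, all vectors π, β ∈ [0,1]^N, and every b ∈ ℝ^N with |b^j| ≤ K for all j, the following holds: if B is the unique solution of the equilibrium drift system with data (π, b) and B̃ is the unique solution of the i-deviated drift system with data (i, π, β, b), then |B̃^k − B^k| ≤ C/N for every k ≠ i. -/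
/-!
Dividing out, each equilibrium equation reads `(1 + πᵏ) Bᵏ = m + bᵏ`, where `m` is the
`π`-weighted mean of `B`. Since `πᵏ ≤ (1 + πᵏ) / 2`, averaging gives `|m| ≤ (|m| + K) / 2`,
so `|m| ≤ K` and `|Bᵏ| ≤ 2K`. For a non-deviating player `k` the difference `D = B̃ - B`
satisfies `(1 + πᵏ/2) |Dᵏ| ≤ |Δ| + 2K/N`, with `Δ` the weighted mean of `D`, while the
deviator's entry is only `O(K) + |Δ|` but carries weight `1/N` in the mean. Averaging once
more gives `(N - 1) |Δ| = O(K)`, hence `|Dᵏ| = O(K/N)`.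
-/

open Finset

noncomputable def driftMean {N : ℕ} (π B : Fin N → ℝ) : ℝ := 1 / (N : ℝ) * ∑ j, π j * B j

def IsEquilibriumDrift {N : ℕ} (π b B : Fin N → ℝ) : Prop :=
  ∀ k, B k = driftMean π B - π k * B k + b k

def IsDeviatedDrift {N : ℕ} (i : Fin N) (π β b B : Fin N → ℝ) : Prop :=
  B i = 1 / (N : ℝ) * ∑ j ∈ univ.erase i, β j * B j - ((N - 1) / N) * π i * B i + b i ∧
    ∀ k, k ≠ i → B k = driftMean π B - 1 / (N : ℝ) * β k * B k - ((N - 1) / N) * π k * B k + b k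

section

variable {N : ℕ} {K : ℝ} {π β b B Bdev : Fin N → ℝ}

theorem sum_erase_le_of_le {f : Fin N → ℝ} {c : ℝ} (i : Fin N) (h : ∀ j, j ≠ i → f j ≤ c) :
    ∑ j ∈ univ.erase i, f j ≤ (N - 1) * c := by
  have hcard : ((univ.erase i).card : ℝ) = N - 1 := by
    rw [card_erase_of_mem (mem_univ i), card_univ, Fintype.card_fin,
      Nat.cast_sub i.pos, Nat.cast_one]
  calc ∑ j ∈ univ.erase i, f j ≤ (univ.erase i).card • c :=
        sum_le_card_nsmul _ _ _ fun j hj => h j (ne_of_mem_erase hj)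
    _ = (N - 1) * c := by rw [nsmul_eq_mul, hcard]

theorem mul_abs_driftMean_le (hπ : ∀ j, 0 ≤ π j) (x : Fin N → ℝ) :
    N * |driftMean π x| ≤ ∑ j, π j * |x j| := by
  rcases N.eq_zero_or_pos with rfl | hN
  · simp
  calc N * |driftMean π x| = |∑ j, π j * x j| := by
        rw [driftMean, abs_mul, abs_of_pos (by positivity), ← mul_assoc, mul_one_div_cancel
          (by positivity), one_mul]
    _ ≤ ∑ j, |π j * x j| := abs_sum_le_sum_abs _ _
    _ = ∑ j, π j * |x j| := by simp only [abs_mul, abs_of_nonneg (hπ _)]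

theorem IsEquilibriumDrift.one_add_mul (hB : IsEquilibriumDrift π b B) (k : Fin N) :
    (1 + π k) * B k = driftMean π B + b k := by
  linear_combination hB k

theorem IsEquilibriumDrift.abs_le (hB : IsEquilibriumDrift π b B)
    (hπ : ∀ j, π j ∈ Set.Icc (0 : ℝ) 1) (hb : ∀ j, |b j| ≤ K) (k : Fin N) : |B k| ≤ 2 * K := by
  set m := driftMean π B
  have hrow : ∀ j, (1 + π j) * |B j| ≤ |m| + K := fun j => by
    calc (1 + π j) * |B j| = |m + b j| := by
          rw [← hB.one_add_mul, abs_mul, abs_of_nonneg (a := 1 + π j) (by linarith [(hπ j).1])]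
      _ ≤ |m| + K := (abs_add_le _ _).trans (by linarith [hb j])
  have hmean : |m| ≤ K := by
    have hN : (0 : ℝ) < N := by exact_mod_cast k.pos
    have hsum : ∑ j, π j * |B j| ≤ N * ((|m| + K) / 2) := by
      calc ∑ j, π j * |B j| ≤ ∑ _j : Fin N, (|m| + K) / 2 := sum_le_sum fun j _ => by
            nlinarith [hrow j, mul_nonneg (sub_nonneg.2 (hπ j).2) (abs_nonneg (B j))]
        _ = N * ((|m| + K) / 2) := by simp
    nlinarith [mul_abs_driftMean_le (fun j => (hπ j).1) B]
  linarith [hrow k, mul_nonneg (hπ k).1 (abs_nonneg (B k))]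

theorem IsDeviatedDrift.one_add_mul_of_ne {i k : Fin N} (hBdev : IsDeviatedDrift i π β b Bdev)
    (hk : k ≠ i) :
    (1 + π k) * Bdev k = driftMean π Bdev + (π k - β k) / N * Bdev k + b k := by
  have hN : (N : ℝ) ≠ 0 := by exact_mod_cast k.pos.ne'
  have := hBdev.2 k hk
  field_simp at this ⊢
  linear_combination this

theorem IsDeviatedDrift.abs_le_deviator {i : Fin N} {M : ℝ} (hBdev : IsDeviatedDrift i π β b Bdev)
    (hπ : ∀ j, π j ∈ Set.Icc (0 : ℝ) 1) (hβ : ∀ j, β j ∈ Set.Icc (0 : ℝ) 1) (hb : ∀ j, |b j| ≤ K)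
    (hM : 0 ≤ M) (hothers : ∀ j, j ≠ i → |Bdev j| ≤ M) : |Bdev i| ≤ M + K := by
  have hN : (1 : ℝ) ≤ N := by exact_mod_cast i.pos
  set τ := 1 / (N : ℝ) * ∑ j ∈ univ.erase i, β j * Bdev j
  have hτ : |τ| ≤ M := by
    have hsum : ∑ j ∈ univ.erase i, |β j * Bdev j| ≤ (N - 1) * M :=
      sum_erase_le_of_le i fun j hj => by
        rw [abs_mul, abs_of_nonneg (hβ j).1]
        nlinarith [hothers j hj, (hβ j).2, abs_nonneg (Bdev j)]
    calc |τ| ≤ 1 / N * ∑ j ∈ univ.erase i, |β j * Bdev j| := by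
          rw [abs_mul, abs_of_pos (by positivity)]
          gcongr
          exact abs_sum_le_sum_abs _ _
      _ ≤ 1 / N * ((N - 1) * M) := by gcongr
      _ = M - M / N := by field_simp
      _ ≤ M := by linarith [div_nonneg hM (by linarith : (0 : ℝ) ≤ N)]
  have hcoef : 0 ≤ (N - 1) / N * π i :=
    mul_nonneg (div_nonneg (by linarith) (by linarith)) (hπ i).1
  calc |Bdev i| ≤ (1 + (N - 1) / N * π i) * |Bdev i| := by
        nlinarith [mul_nonneg hcoef (abs_nonneg (Bdev i))]
    _ = |τ + b i| := by
        rw [← abs_of_nonneg (a := 1 + _) (by linarith), ← abs_mul]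
        congr 1
        linear_combination hBdev.1
    _ ≤ M + K := (abs_add_le _ _).trans (add_le_add hτ (hb i))

theorem driftMean_sub (π x y : Fin N → ℝ) : driftMean π (x - y) = driftMean π x - driftMean π y := by
  simp only [driftMean, Pi.sub_apply, mul_sub, sum_sub_distrib]

theorem IsDeviatedDrift.one_add_half_mul_abs_sub_le {i k : Fin N} (hN : 2 ≤ N)
    (hπ : ∀ j, π j ∈ Set.Icc (0 : ℝ) 1) (hβ : ∀ j, β j ∈ Set.Icc (0 : ℝ) 1) (hb : ∀ j, |b j| ≤ K)
    (hB : IsEquilibriumDrift π b B) (hBdev : IsDeviatedDrift i π β b Bdev) (hk : k ≠ i) :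
    (1 + π k / 2) * |Bdev k - B k| ≤ |driftMean π Bdev - driftMean π B| + 2 * K / N := by
  have hN' : (2 : ℝ) ≤ N := by exact_mod_cast hN
  have hrow : (1 + π k - (π k - β k) / N) * (Bdev k - B k)
      = (driftMean π Bdev - driftMean π B) + (π k - β k) / N * B k := by
    linear_combination hBdev.one_add_mul_of_ne hk - hB.one_add_mul k
  have hcoef : 1 + π k / 2 ≤ 1 + π k - (π k - β k) / N := by
    have : (π k - β k) / N ≤ π k / 2 := by
      rw [div_le_div_iff₀ (by linarith) (by norm_num)]
      nlinarith [(hπ k).1, (hβ k).1]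
    linarith
  have hpert : |(π k - β k) / N * B k| ≤ 2 * K / N := by
    have hdiff : |π k - β k| ≤ 1 :=
      abs_le.2 ⟨by linarith [(hπ k).1, (hβ k).2], by linarith [(hπ k).2, (hβ k).1]⟩
    rw [abs_mul, abs_div, abs_of_pos (by linarith : (0 : ℝ) < N), div_mul_eq_mul_div]
    refine div_le_div_of_nonneg_right ?_ (by linarith)
    nlinarith [hB.abs_le hπ hb k, abs_nonneg (π k - β k), abs_nonneg (B k)]
  calc (1 + π k / 2) * |Bdev k - B k| ≤ (1 + π k - (π k - β k) / N) * |Bdev k - B k| :=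
        mul_le_mul_of_nonneg_right hcoef (abs_nonneg _)
    _ = |(driftMean π Bdev - driftMean π B) + (π k - β k) / N * B k| := by
        rw [← hrow, abs_mul, abs_of_nonneg (a := 1 + π k - _) (by linarith [(hπ k).1])]
    _ ≤ |driftMean π Bdev - driftMean π B| + 2 * K / N := (abs_add_le _ _).trans (by linarith)

theorem IsDeviatedDrift.mul_abs_driftMean_sub_le {i : Fin N} (hN : 2 ≤ N)
    (hπ : ∀ j, π j ∈ Set.Icc (0 : ℝ) 1) (hβ : ∀ j, β j ∈ Set.Icc (0 : ℝ) 1) (hb : ∀ j, |b j| ≤ K)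
    (hB : IsEquilibriumDrift π b B) (hBdev : IsDeviatedDrift i π β b Bdev) :
    N * |driftMean π Bdev - driftMean π B| ≤ 44 * K := by
  have hN' : (2 : ℝ) ≤ N := by exact_mod_cast hN
  have hK : 0 ≤ K := (abs_nonneg _).trans (hb i)
  set Δ := |driftMean π Bdev - driftMean π B|
  set t := 2 * K / N
  have ht : N * t = 2 * K := by simp only [t]; field_simp
  have hrow : ∀ j, j ≠ i → (1 + π j / 2) * |Bdev j - B j| ≤ Δ + t := fun j hj =>
    hBdev.one_add_half_mul_abs_sub_le hN hπ hβ hb hB hj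
  have hothers : ∀ j, j ≠ i → π j * |Bdev j - B j| ≤ 2 / 3 * (Δ + t) := fun j hj => by
    nlinarith [hrow j hj, mul_nonneg (sub_nonneg.2 (hπ j).2) (abs_nonneg (Bdev j - B j))]
  have hdeviator : |Bdev i - B i| ≤ 5 * K + (Δ + t) := by
    have hBdev_le : ∀ j, j ≠ i → |Bdev j| ≤ 2 * K + (Δ + t) := fun j hj => by
      have := abs_sub_abs_le_abs_sub (Bdev j) (B j)
      nlinarith [hrow j hj, hB.abs_le hπ hb j, mul_nonneg (hπ j).1 (abs_nonneg (Bdev j - B j))]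
    have := hBdev.abs_le_deviator hπ hβ hb (by positivity) hBdev_le
    linarith [abs_sub (Bdev i) (B i), hB.abs_le hπ hb i]
  have hsum : N * Δ ≤ (N - 1) * (2 / 3 * (Δ + t)) + (5 * K + (Δ + t)) := by
    calc N * Δ = N * |driftMean π (Bdev - B)| := by rw [driftMean_sub]
      _ ≤ ∑ j, π j * |(Bdev - B) j| := mul_abs_driftMean_le (fun j => (hπ j).1) _
      _ = ∑ j ∈ univ.erase i, π j * |Bdev j - B j| + π i * |Bdev i - B i| :=
          (sum_erase_add _ _ (mem_univ i)).symm
      _ ≤ (N - 1) * (2 / 3 * (Δ + t)) + (5 * K + (Δ + t)) := by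
          gcongr
          · exact sum_erase_le_of_le i hothers
          · nlinarith [(hπ i).2, abs_nonneg (Bdev i - B i)]
  have ht_le : t ≤ K := by nlinarith
  have hcontract : (N - 1) * Δ ≤ 22 * K := by nlinarith
  nlinarith [abs_nonneg (driftMean π Bdev - driftMean π B)]

end

/-- Drift estimate of Lemma 7.1: there is `C > 0` depending only on the bound
`K` on `b` such that, when one player `i` deviates, the drifts of the other
players change by at most `C/N`. -/
theorem deviated_drift_perturbation_bound (K : ℝ) (hK : 0 < K) :
    ∃ C : ℝ, 0 < C ∧
      ∀ (N : ℕ), 2 ≤ N → ∀ (i : Fin N) (π β b : Fin N → ℝ),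
        (∀ j, π j ∈ Set.Icc (0 : ℝ) 1) →
        (∀ j, β j ∈ Set.Icc (0 : ℝ) 1) →
        (∀ j, |b j| ≤ K) →
        ∀ B Bdev : Fin N → ℝ,
          (∀ k, B k = (1 / (N : ℝ)) * ∑ j, π j * B j - π k * B k + b k) →
          ((Bdev i = (1 / (N : ℝ)) * ∑ j ∈ Finset.univ.erase i, β j * Bdev j
              - (((N : ℝ) - 1) / N) * π i * Bdev i + b i) ∧
           (∀ k, k ≠ i → Bdev k = (1 / (N : ℝ)) * ∑ j, π j * Bdev j
              - (1 / (N : ℝ)) * β k * Bdev k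
              - (((N : ℝ) - 1) / N) * π k * Bdev k + b k)) →
          ∀ k, k ≠ i → |Bdev k - B k| ≤ C / N := by
  refine ⟨46 * K, by positivity, ?_⟩
  intro N hN i π β b hπ hβ hb B Bdev hB hBdev k hk
  have hNpos : (0 : ℝ) < N := by positivity
  have hrow := IsDeviatedDrift.one_add_half_mul_abs_sub_le hN hπ hβ hb hB hBdev hk
  have hmean := IsDeviatedDrift.mul_abs_driftMean_sub_le hN hπ hβ hb hB hBdev
  rw [le_div_iff₀ hNpos]
  calc |Bdev k - B k| * N ≤ (1 + π k / 2) * |Bdev k - B k| * N := by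
        gcongr
        nlinarith [(hπ k).1, abs_nonneg (Bdev k - B k)]
    _ ≤ (|driftMean π Bdev - driftMean π B| + 2 * K / N) * N := by gcongr
    _ = N * |driftMean π Bdev - driftMean π B| + 2 * K := by field_simp
    _ ≤ 46 * K := by linarith
end

section
/- Let N ≥ 1 be an integer, π ∈ [0,1]^N and σ = (σ¹,…,σ^N) ∈ ℝ^N. Set w̄ := (1/N)·Σ_{k=1}^N π^k/(1+π^k) and, for q ∈ {1,…,N}, A^q := (π^q/(1+π^q))/(1 − w̄), which is well defined since w̄ ≤ 1/2. Define the N×N matrix Σ by Σ^{i,q} := (σ^i·𝟙_{i=q} + (1/N)·A^q·σ^q)/(1 + π^i). Then Σ is the unique solution of the linear system: Σ^{i,q} = (1/N)·Σ_{j=1}^N π^j Σ^{j,q} − π^i Σ^{i,q} + σ^i·𝟙_{q=i}, for all i, q ∈ {1,…,N}. -/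
open Finset

/-- The diffusion matrix of the `N`-player mutual holding game under the
strategy `γ^{i,j} = π^j`: the matrix
`Σ^{i,q} = (σ^i 𝟙_{i=q} + (1/N) A^q σ^q)/(1 + π^i)`, with
`A^q = (π^q/(1+π^q))/(1 - w̄)` and `w̄ = (1/N) ∑_k π^k/(1+π^k) ≤ 1/2`,
is the unique solution of the linear system
`Σ^{i,q} = (1/N) ∑_j π^j Σ^{j,q} - π^i Σ^{i,q} + σ^i 𝟙_{q=i}`. -/
theorem diffusion_matrix_solution
    (N : ℕ) (hN : 1 ≤ N) (π σ : Fin N → ℝ)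
    (hπ : ∀ i, π i ∈ Set.Icc (0 : ℝ) 1) :
    let wbar : ℝ := (1 / (N : ℝ)) * ∑ k, π k / (1 + π k)
    let A : Fin N → ℝ := fun q => (π q / (1 + π q)) / (1 - wbar)
    let Sig : Fin N → Fin N → ℝ := fun i q =>
      (σ i * (if i = q then (1 : ℝ) else 0) + (1 / (N : ℝ)) * A q * σ q) / (1 + π i)
    (∀ i q, Sig i q = (1 / (N : ℝ)) * ∑ j, π j * Sig j q - π i * Sig i q
        + σ i * (if q = i then (1 : ℝ) else 0)) ∧
    (∀ Sig' : Fin N → Fin N → ℝ,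
      (∀ i q, Sig' i q = (1 / (N : ℝ)) * ∑ j, π j * Sig' j q - π i * Sig' i q
          + σ i * (if q = i then (1 : ℝ) else 0)) →
      Sig' = Sig) := by
  intro wbar A Sig
  have hNpos : (0:ℝ) < N := by exact_mod_cast hN
  have hN0 : (N:ℝ) ≠ 0 := ne_of_gt hNpos
  have h1π : ∀ i, (0:ℝ) < 1 + π i := fun i => by have := (hπ i).1; linarith
  have h1πne : ∀ i, (1:ℝ) + π i ≠ 0 := fun i => ne_of_gt (h1π i)
  have hsumle : ∑ k, π k / (1 + π k) ≤ (N:ℝ) * (1/2) := by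
    calc ∑ k, π k / (1 + π k) ≤ ∑ _k : Fin N, (1/2:ℝ) := by
          apply Finset.sum_le_sum
          intro k _
          rw [div_le_iff₀ (h1π k)]
          have := (hπ k).2; linarith
      _ = (N:ℝ) * (1/2) := by simp [mul_comm]
  have hwbar : wbar ≤ 1/2 := by
    have h2 : wbar ≤ (1/(N:ℝ)) * ((N:ℝ) * (1/2)) :=
      mul_le_mul_of_nonneg_left hsumle (by positivity)
    have h3 : (1/(N:ℝ)) * ((N:ℝ) * (1/2)) = 1/2 := by field_simp
    linarith
  have hw : (0:ℝ) < 1 - wbar := by linarith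
  have hwne : (1:ℝ) - wbar ≠ 0 := ne_of_gt hw
  have hA : ∀ q, A q * (1 - wbar) = π q / (1 + π q) := fun q =>
    div_mul_cancel₀ _ hwne
  have hsum_eq : ∑ j, π j / (1 + π j) = (N:ℝ) * wbar := by
    show _ = (N:ℝ) * ((1/(N:ℝ)) * ∑ k, π k / (1 + π k))
    field_simp
  have keysum : ∀ q, ∑ j, π j * Sig j q = A q * σ q := by
    intro q
    have term : ∀ j, π j * Sig j q
        = (if q = j then π j / (1 + π j) * σ j else 0)
          + π j / (1 + π j) * ((1/(N:ℝ)) * A q * σ q) := by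
      intro j
      show π j * ((σ j * (if j = q then (1:ℝ) else 0) + (1/(N:ℝ)) * A q * σ q) / (1 + π j)) = _
      by_cases hjq : j = q
      · subst hjq
        rw [if_pos rfl, if_pos rfl]
        ring
      · rw [if_neg hjq, if_neg (Ne.symm hjq)]
        ring
    calc ∑ j, π j * Sig j q
        = ∑ j, ((if q = j then π j / (1 + π j) * σ j else 0)
            + π j / (1 + π j) * ((1/(N:ℝ)) * A q * σ q)) :=
          Finset.sum_congr rfl (fun j _ => term j)
      _ = π q / (1 + π q) * σ q
            + (∑ j, π j / (1 + π j)) * ((1/(N:ℝ)) * A q * σ q) := by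
          rw [Finset.sum_add_distrib, ← Finset.sum_mul, Finset.sum_ite_eq]
          simp
      _ = A q * σ q := by
          rw [hsum_eq]
          have h2 := hA q
          have hNN : (N:ℝ) * (1/(N:ℝ)) = 1 := by field_simp
          clear_value Sig A wbar
          linear_combination (wbar * A q * σ q) * hNN - σ q * h2
  constructor
  · intro i q
    rw [keysum q]
    have hexp : (1 + π i) * Sig i q
        = σ i * (if i = q then (1:ℝ) else 0) + (1/(N:ℝ)) * A q * σ q := by
      show (1 + π i) * ((σ i * (if i = q then (1:ℝ) else 0) + (1/(N:ℝ)) * A q * σ q) / (1 + π i)) = _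
      rw [mul_comm, div_mul_cancel₀ _ (h1πne i)]
    by_cases h : i = q
    · subst h
      rw [if_pos rfl] at hexp
      rw [if_pos rfl]
      linear_combination hexp
    · rw [if_neg h] at hexp
      rw [if_neg (Ne.symm h)]
      linear_combination hexp
  · intro Sig' h
    funext i q
    set s : ℝ := (1/(N:ℝ)) * ∑ j, π j * Sig' j q with hs
    have hform : ∀ j, Sig' j q = (s + σ j * (if q = j then (1:ℝ) else 0)) / (1 + π j) := by
      intro j
      have hj := h j q
      rw [← hs] at hj
      rw [eq_div_iff (h1πne j)]
      linear_combination hj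
    have hsum' : ∑ j, π j * Sig' j q
        = (N:ℝ) * wbar * s + π q / (1 + π q) * σ q := by
      calc ∑ j, π j * Sig' j q
          = ∑ j, (π j / (1 + π j) * s + (if q = j then π j / (1 + π j) * σ j else 0)) := by
            refine Finset.sum_congr rfl fun j _ => ?_
            rw [hform j]
            by_cases hj : q = j
            · subst hj
              rw [if_pos rfl, if_pos rfl]
              ring
            · rw [if_neg hj, if_neg hj]
              ring
        _ = (∑ j, π j / (1 + π j)) * s + π q / (1 + π q) * σ q := by
            rw [Finset.sum_add_distrib, ← Finset.sum_mul, Finset.sum_ite_eq]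
            simp
        _ = (N:ℝ) * wbar * s + π q / (1 + π q) * σ q := by rw [hsum_eq]
    have hNN : (N:ℝ) * (1/(N:ℝ)) = 1 := by field_simp
    have h1 : s = wbar * s + (1/(N:ℝ)) * (π q / (1 + π q)) * σ q := by
      calc s = (1/(N:ℝ)) * ∑ j, π j * Sig' j q := hs
        _ = (1/(N:ℝ)) * ((N:ℝ) * wbar * s + π q / (1 + π q) * σ q) := by rw [hsum']
        _ = wbar * s + (1/(N:ℝ)) * (π q / (1 + π q)) * σ q := by
            linear_combination (wbar * s) * hNN
    have h2 := hA q
    have h3 : s * (1 - wbar) = (1/(N:ℝ)) * (π q / (1 + π q)) * σ q := by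
      linear_combination h1
    have hs_eq : s = (1/(N:ℝ)) * A q * σ q := by
      apply mul_right_cancel₀ hwne
      linear_combination h3 - (1/(N:ℝ)) * σ q * h2
    rw [hform i, hs_eq]
    show _ = (σ i * (if i = q then (1:ℝ) else 0) + (1/(N:ℝ)) * A q * σ q) / (1 + π i)
    by_cases hiq : i = q
    · subst hiq
      rw [if_pos rfl]
      ring
    · rw [if_neg (Ne.symm hiq), if_neg hiq]
      ring
end

section
/- Let N ≥ 1 be an integer, π ∈ [0,1]^N and σ ∈ ℝ^N. Define w̄ := (1/N)·Σ_{k=1}^N π^k/(1+π^k), A^q := (π^q/(1+π^q))/(1 − w̄), and Σ^{i,q} := (σ^i·𝟙_{i=q} + (1/N)·A^q·σ^q)/(1 + π^i). Then 0 ≤ A^q ≤ 1 for all q, and: (i) |Σ^{i,q}| ≤ |σ^q|/N for all i ≠ q; (ii) |Σ^{i,i} − σ^i/(1 + π^i)| ≤ |σ^i|/N for all i. -/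
open Finset

/-- Diffusion estimates of Lemma 7.1: with
`w̄ = (1/N) ∑_k π^k/(1+π^k)`, `A^q = (π^q/(1+π^q))/(1 - w̄)` and
`Σ^{i,q} = (σ^i 𝟙_{i=q} + (1/N) A^q σ^q)/(1 + π^i)`, one has `0 ≤ A^q ≤ 1`,
`|Σ^{i,q}| ≤ |σ^q|/N` for `i ≠ q`, and `|Σ^{i,i} - σ^i/(1+π^i)| ≤ |σ^i|/N`. -/
theorem diffusion_matrix_bounds
    (N : ℕ) (hN : 1 ≤ N) (π σ : Fin N → ℝ)
    (hπ : ∀ i, π i ∈ Set.Icc (0 : ℝ) 1) :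
    let wbar : ℝ := (1 / (N : ℝ)) * ∑ k, π k / (1 + π k)
    let A : Fin N → ℝ := fun q => (π q / (1 + π q)) / (1 - wbar)
    let Sig : Fin N → Fin N → ℝ := fun i q =>
      (σ i * (if i = q then (1 : ℝ) else 0) + (1 / (N : ℝ)) * A q * σ q) / (1 + π i)
    (∀ q, 0 ≤ A q ∧ A q ≤ 1) ∧
    (∀ i q, i ≠ q → |Sig i q| ≤ |σ q| / N) ∧
    (∀ i, |Sig i i - σ i / (1 + π i)| ≤ |σ i| / N) := by
  intro wbar A Sig
  have hNpos : (0 : ℝ) < N := by exact_mod_cast hN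
  have h1π : ∀ i, (0:ℝ) < 1 + π i := fun i => by
    have := (hπ i).1; linarith
  have hterm0 : ∀ k, (0:ℝ) ≤ π k / (1 + π k) := fun k =>
    div_nonneg (hπ k).1 (h1π k).le
  have hterm_half : ∀ k, π k / (1 + π k) ≤ 1 / 2 := fun k => by
    rw [div_le_div_iff₀ (h1π k) two_pos]
    have h1 := (hπ k).1; have h2 := (hπ k).2; linarith
  have hwbar0 : 0 ≤ wbar := by
    apply mul_nonneg (by positivity)
    exact Finset.sum_nonneg fun k _ => hterm0 k
  have hwbar_half : wbar ≤ 1 / 2 := by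
    have hsum : ∑ k, π k / (1 + π k) ≤ (N : ℝ) * (1/2) := by
      calc ∑ k : Fin N, π k / (1 + π k) ≤ ∑ _k : Fin N, (1/2 : ℝ) :=
            Finset.sum_le_sum fun k _ => hterm_half k
        _ = (N : ℝ) * (1/2) := by simp [Finset.sum_const, mul_comm]
    have : wbar ≤ (1 / (N:ℝ)) * ((N:ℝ) * (1/2)) := by
      apply mul_le_mul_of_nonneg_left hsum (by positivity)
    calc wbar ≤ (1 / (N:ℝ)) * ((N:ℝ) * (1/2)) := this
      _ = 1/2 := by field_simp
  have hden : (0:ℝ) < 1 - wbar := by linarith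
  have hA : ∀ q, 0 ≤ A q ∧ A q ≤ 1 := by
    intro q
    constructor
    · exact div_nonneg (hterm0 q) hden.le
    · rw [div_le_one hden]
      have := hterm_half q; linarith
  refine ⟨hA, ?_, ?_⟩
  · intro i q hiq
    have : Sig i q = (1 / (N:ℝ)) * A q * σ q / (1 + π i) := by
      simp only [Sig, if_neg hiq, mul_zero, zero_add]
    rw [this, abs_div, abs_mul, abs_mul]
    rw [abs_of_pos (h1π i), abs_of_nonneg (hA q).1,
        abs_of_nonneg (one_div_nonneg.mpr hNpos.le)]
    rw [div_le_div_iff₀ (h1π i) hNpos]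
    have h1 : 1 / (N:ℝ) * A q * |σ q| ≤ 1 / (N:ℝ) * |σ q| :=
      mul_le_mul_of_nonneg_right
        (mul_le_of_le_one_right (by positivity) (hA q).2) (abs_nonneg _)
    have h2 : (1:ℝ) ≤ 1 + π i := by have := (hπ i).1; linarith
    calc 1 / (N:ℝ) * A q * |σ q| * (N:ℝ) ≤ 1 / (N:ℝ) * |σ q| * (N:ℝ) := by
          exact mul_le_mul_of_nonneg_right h1 hNpos.le
      _ = |σ q| := by field_simp
      _ ≤ |σ q| * (1 + π i) := by nlinarith [abs_nonneg (σ q)]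
  · intro i
    have : Sig i i - σ i / (1 + π i) = (1 / (N:ℝ)) * A i * σ i / (1 + π i) := by
      simp only [Sig, if_pos rfl, if_true, mul_one, add_div]
      ring
    rw [this, abs_div, abs_mul, abs_mul]
    rw [abs_of_pos (h1π i), abs_of_nonneg (hA i).1,
        abs_of_nonneg (one_div_nonneg.mpr hNpos.le)]
    rw [div_le_div_iff₀ (h1π i) hNpos]
    have h1 : 1 / (N:ℝ) * A i * |σ i| ≤ 1 / (N:ℝ) * |σ i| :=
      mul_le_mul_of_nonneg_right
        (mul_le_of_le_one_right (by positivity) (hA i).2) (abs_nonneg _)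
    calc 1 / (N:ℝ) * A i * |σ i| * (N:ℝ) ≤ 1 / (N:ℝ) * |σ i| * (N:ℝ) :=
          mul_le_mul_of_nonneg_right h1 hNpos.le
      _ = |σ i| := by field_simp
      _ ≤ |σ i| * (1 + π i) := by nlinarith [abs_nonneg (σ i), (hπ i).1]
end
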